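/- Let G = (V,E,B) be a directed mixed graph and let P be a partition of its nodes. (i) If π is a walk on G whose induced coarse walk co(π) on co(G,P) is m-blocked by a set S ⊆ P, then π is m-blocked by T = ∪_{W∈S} W. (ii) If a set S ⊆ P m-separates groups Y and Z in co(G,P), then T = ∪_{W∈S} W m-separates every pair of micro-nodes y ∈ Y, z ∈ Z in G. -/
import Mathlib


/-! ## Mixed graphs -/

/-- A mixed graph: directed, bidirected and undirected edges, no self-edges. -/
structure MixedGraph (V : Type) where
  dir : V → V → Prop
  bidir : V → V → Prop
  undir : V → V → Prop
  bidir_symm : ∀ {a b}, bidir a b → bidir b a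
  undir_symm : ∀ {a b}, undir a b → undir b a
  dir_irrefl : ∀ a, ¬ dir a a
  bidir_irrefl : ∀ a, ¬ bidir a a
  undir_irrefl : ∀ a, ¬ undir a a

namespace MixedGraph

variable {V I : Type}

/-- A directed mixed graph is a mixed graph without undirected edges. -/
def IsDMG (G : MixedGraph V) : Prop := ∀ a b, ¬ G.undir a b

/-- `a` and `b` lie in the same strongly connected component: there are directed
paths between them in both directions. -/
def Strongly (G : MixedGraph V) (a b : V) : Prop :=
  Relation.ReflTransGen G.dir a b ∧ Relation.ReflTransGen G.dir b a

lemma Strongly.refl (G : MixedGraph V) (a : V) : G.Strongly a a :=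
  ⟨Relation.ReflTransGen.refl, Relation.ReflTransGen.refl⟩

lemma Strongly.symm {G : MixedGraph V} {a b : V} (h : G.Strongly a b) : G.Strongly b a :=
  ⟨h.2, h.1⟩

/-- A graph is acyclic if it has no nontrivial directed closed walk. -/
def Acyclic (G : MixedGraph V) : Prop := ∀ a, ¬ Relation.TransGen G.dir a a

end MixedGraph

/-! ## Walks -/

/-- The four ways in which an edge can occur on a walk, as traversed from its
first node `a` to its second node `b`: `fw` is `a → b`, `bw` is `a ← b`,
`bi` is `a ↔ b` and `un` is `a − b`. -/
inductive StepKind | fw | bw | bi | un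
deriving DecidableEq

/-- A step of a walk: an ordered pair of nodes together with the kind of edge. -/
structure Step (V : Type) where
  a : V
  b : V
  k : StepKind

/-- The step is an actual edge of the graph `G`. -/
def Step.ok {V : Type} (G : MixedGraph V) (s : Step V) : Prop :=
  match s.k with
  | .fw => G.dir s.a s.b
  | .bw => G.dir s.b s.a
  | .bi => G.bidir s.a s.b
  | .un => G.undir s.a s.b

/-- The edge of the step has an arrowhead at its first node. -/
def Step.headA {V : Type} (s : Step V) : Prop := s.k = .bw ∨ s.k = .bi

/-- The edge of the step has an arrowhead at its second node. -/
def Step.headB {V : Type} (s : Step V) : Prop := s.k = .fw ∨ s.k = .bi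

namespace MixedGraph

variable {V I : Type}

/-- `IsWalk G x y L`: the list of steps `L` forms a walk from `x` to `y` in `G`. -/
inductive IsWalk (G : MixedGraph V) : V → V → List (Step V) → Prop
  | nil (a : V) : IsWalk G a a []
  | cons {c : V} (s : Step V) (L : List (Step V)) (hok : s.ok G)
      (hw : IsWalk G s.b c L) : IsWalk G s.a c (s :: L)

/-- `v` is a collider at junction `i` of the walk `L`: both edges adjacent to the
inner node `v` point into `v`. -/
def ColliderAt (L : List (Step V)) (i : ℕ) (v : V) : Prop :=
  ∃ s t, L[i]? = some s ∧ L[i+1]? = some t ∧ s.b = v ∧ t.a = v ∧ s.headB ∧ t.headA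

/-- `v` is a non-collider at junction `i` of the walk `L`. -/
def NonColliderAt (L : List (Step V)) (i : ℕ) (v : V) : Prop :=
  ∃ s t, L[i]? = some s ∧ L[i+1]? = some t ∧ s.b = v ∧ t.a = v ∧ ¬ (s.headB ∧ t.headA)

/-- The walk `L` from `x` to `y` is m-blocked by the node set `S`. -/
def MBlockedWalk (G : MixedGraph V) (S : Set V) (x y : V) (L : List (Step V)) : Prop :=
  x ∈ S ∨ y ∈ S ∨
  (∃ i v, ColliderAt L i v ∧ ∀ d, Relation.ReflTransGen G.dir v d → d ∉ S) ∨
  (∃ i v, NonColliderAt L i v ∧ v ∈ S)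

/-- The walk `L` from `x` to `y` is σ-blocked by the node set `S`. -/
def SigmaBlockedWalk (G : MixedGraph V) (S : Set V) (x y : V) (L : List (Step V)) : Prop :=
  x ∈ S ∨ y ∈ S ∨
  (∃ i v, ColliderAt L i v ∧ ∀ d, Relation.ReflTransGen G.dir v d → d ∉ S) ∨
  (∃ i s t, L[i]? = some s ∧ L[i+1]? = some t ∧ s.b = t.a ∧ ¬ (s.headB ∧ t.headA) ∧
    s.b ∈ S ∧
    (((s.k = .bw ∨ s.k = .un) ∧ ¬ G.Strongly s.b s.a) ∨
     ((t.k = .fw ∨ t.k = .un) ∧ ¬ G.Strongly t.a t.b)))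

/-- `x` and `y` are m-separated by `S` in `G`. -/
def MSep (G : MixedGraph V) (S : Set V) (x y : V) : Prop :=
  ∀ L, G.IsWalk x y L → G.MBlockedWalk S x y L

/-- `x` and `y` are σ-separated by `S` in `G`. -/
def SigmaSep (G : MixedGraph V) (S : Set V) (x y : V) : Prop :=
  ∀ L, G.IsWalk x y L → G.SigmaBlockedWalk S x y L

/-! ## Acyclification -/

/-- The acyclification of a mixed graph. -/
def acy (G : MixedGraph V) : MixedGraph V where
  dir a b := (∃ c, G.dir a c ∧ G.Strongly c b) ∧ ¬ G.Strongly a b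
  bidir a b := a ≠ b ∧ (G.Strongly a b ∨
    ∃ a' b', G.Strongly a a' ∧ G.Strongly b b' ∧ G.bidir a' b')
  undir a b := ¬ G.Strongly a b ∧ G.undir a b
  bidir_symm := by
    rintro a b ⟨hab, h | ⟨a', b', ha, hb, h⟩⟩
    · exact ⟨hab.symm, Or.inl h.symm⟩
    · exact ⟨hab.symm, Or.inr ⟨b', a', hb, ha, G.bidir_symm h⟩⟩
  undir_symm := by
    rintro a b ⟨h1, h2⟩
    exact ⟨fun h => h1 h.symm, G.undir_symm h2⟩
  dir_irrefl := fun a h => h.2 (Strongly.refl G a)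
  bidir_irrefl := fun a h => h.1 rfl
  undir_irrefl := fun a h => h.1 (Strongly.refl G a)

/-! ## Coarse graphs -/

/-- The coarse (quotient) graph of `G` with respect to the partition given by the
quotient map `q` onto the set of groups `I`. -/
def coarse (G : MixedGraph V) (q : V → I) : MixedGraph I where
  dir Y Z := Y ≠ Z ∧ ∃ y z, q y = Y ∧ q z = Z ∧ G.dir y z
  bidir Y Z := Y ≠ Z ∧ ∃ y z, q y = Y ∧ q z = Z ∧ G.bidir y z
  undir Y Z := Y ≠ Z ∧ ∃ y z, q y = Y ∧ q z = Z ∧ G.undir y z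
  bidir_symm := by
    rintro Y Z ⟨hne, y, z, hy, hz, h⟩
    exact ⟨hne.symm, z, y, hz, hy, G.bidir_symm h⟩
  undir_symm := by
    rintro Y Z ⟨hne, y, z, hy, hz, h⟩
    exact ⟨hne.symm, z, y, hz, hy, G.undir_symm h⟩
  dir_irrefl := fun Y h => h.1 rfl
  bidir_irrefl := fun Y h => h.1 rfl
  undir_irrefl := fun Y h => h.1 rfl

end MixedGraph

open Classical in
/-- The coarse walk induced by a micro walk: steps internal to a group are dropped
(collapsing each `P`-segment to the single group containing it) and every
between-group step is replaced by the step of the same kind between the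
corresponding groups. -/
noncomputable def coWalk {V I : Type} (q : V → I) (L : List (Step V)) : List (Step I) :=
  L.filterMap fun s => if q s.a = q s.b then none else some ⟨q s.a, q s.b, s.k⟩

section Aux

open MixedGraph

variable {V I : Type} {G : MixedGraph V} {q : V → I}

lemma coWalk_nil (q : V → I) : coWalk q ([] : List (Step V)) = [] := rfl

lemma coWalk_cons_eq (q : V → I) {s : Step V} (L : List (Step V))
    (h : q s.a = q s.b) : coWalk q (s :: L) = coWalk q L := by
  simp [coWalk, List.filterMap_cons, h]

lemma coWalk_cons_ne (q : V → I) {s : Step V} (L : List (Step V))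
    (h : ¬ q s.a = q s.b) :
    coWalk q (s :: L) = ⟨q s.a, q s.b, s.k⟩ :: coWalk q L := by
  simp [coWalk, List.filterMap_cons, h]

lemma colliderAt_consShift {L : List (Step V)} {s : Step V} {i : ℕ} {v : V}
    (h : ColliderAt L i v) : ColliderAt (s :: L) (i + 1) v := by
  obtain ⟨a, b, h1, h2, h3, h4, h5, h6⟩ := h
  exact ⟨a, b, by simpa using h1, by simpa using h2, h3, h4, h5, h6⟩

lemma nonColliderAt_consShift {L : List (Step V)} {s : Step V} {i : ℕ} {v : V}
    (h : NonColliderAt L i v) : NonColliderAt (s :: L) (i + 1) v := by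
  obtain ⟨a, b, h1, h2, h3, h4, h5⟩ := h
  exact ⟨a, b, by simpa using h1, by simpa using h2, h3, h4, h5⟩

lemma walk_cons_start {u : Step V} {L : List (Step V)} {x c : V}
    (hw : G.IsWalk x c (u :: L)) : u.a = x := by cases hw; rfl

lemma map_desc (q : V → I) {a b : V} (h : Relation.ReflTransGen G.dir a b) :
    Relation.ReflTransGen (G.coarse q).dir (q a) (q b) := by
  induction h with
  | refl => exact Relation.ReflTransGen.refl
  | @tail b c _ hbc ih =>
    by_cases hq : q b = q c
    · exact hq ▸ ih
    · exact ih.tail ⟨hq, b, c, rfl, rfl, hbc⟩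

lemma coWalk_isWalk {x y : V} {L : List (Step V)} (hw : G.IsWalk x y L) :
    (G.coarse q).IsWalk (q x) (q y) (coWalk q L) := by
  induction hw with
  | nil a => exact IsWalk.nil (q a)
  | @cons c s L hok hw ih =>
    by_cases hq : q s.a = q s.b
    · rw [coWalk_cons_eq q L hq, hq]; exact ih
    · rw [coWalk_cons_ne q L hq]
      refine IsWalk.cons ⟨q s.a, q s.b, s.k⟩ _ ?_ ih
      cases hk : s.k <;> simp only [Step.ok, hk] at hok ⊢
      · exact ⟨hq, s.a, s.b, rfl, rfl, hok⟩
      · exact ⟨fun h => hq h.symm, s.b, s.a, rfl, rfl, hok⟩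
      · exact ⟨hq, s.a, s.b, rfl, rfl, hok⟩
      · exact ⟨hq, s.a, s.b, rfl, rfl, hok⟩

/-- Along a within-group segment headed into by an arrowhead, if the first
coarse step after the segment also has an arrowhead at its first node, then
there is a micro collider all of whose descendants avoid `S`. -/
lemma seg_coll (hDMG : G.IsDMG) (S : Set I) :
    ∀ (L : List (Step V)) (v c : V), G.IsWalk v c L → ∀ prev : Step V,
      prev.b = v → prev.headB →
      (∀ d, Relation.ReflTransGen G.dir v d → q d ∉ S) →
      ∀ t', (coWalk q L)[0]? = some t' → t'.headA →
      ∃ i u, ColliderAt (prev :: L) i u ∧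
        ∀ d, Relation.ReflTransGen G.dir u d → d ∉ q ⁻¹' S := by
  intro L
  induction L with
  | nil =>
    intro v c _ prev _ _ _ t' ht _
    simp [coWalk_nil] at ht
  | cons u L'' ih =>
    intro v c hw prev hpb hph hdesc t' ht hta
    cases hw with
    | cons _ _ hok hw' =>
      by_cases hq : q u.a = q u.b
      · rw [coWalk_cons_eq q L'' hq] at ht
        by_cases hha : u.headA
        · exact ⟨0, u.a, ⟨prev, u, by simp, by simp, hpb, rfl, hph, hha⟩,
            fun d hd hdT => hdesc d hd hdT⟩
        · have hk : u.k = .fw := by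
            rcases hk' : u.k with _ | _ | _ | _
            · rfl
            · exact absurd (Or.inl hk') hha
            · exact absurd (Or.inr hk') hha
            · exact absurd (by simpa [Step.ok, hk'] using hok) (hDMG u.a u.b)
          have hdir : G.dir u.a u.b := by simpa [Step.ok, hk] using hok
          have hdesc' : ∀ d, Relation.ReflTransGen G.dir u.b d → q d ∉ S :=
            fun d hd => hdesc d (Relation.ReflTransGen.head hdir hd)
          obtain ⟨i, w, hc, hd⟩ :=
            ih u.b c hw' u rfl (Or.inl hk) hdesc' t' ht hta
          exact ⟨i + 1, w, colliderAt_consShift hc, hd⟩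
      · rw [coWalk_cons_ne q L'' hq] at ht
        simp only [List.getElem?_cons_zero, Option.some.injEq] at ht
        have hha : u.headA := by
          rcases hta with h | h
          · exact Or.inl (by rw [← ht] at h; exact h)
          · exact Or.inr (by rw [← ht] at h; exact h)
        exact ⟨0, u.a, ⟨prev, u, by simp, by simp, hpb, rfl, hph, hha⟩,
          fun d hd hdT => hdesc d hd hdT⟩

/-- Along a within-group segment, if the first coarse step after the segment has
no arrowhead at its first node and that node's group is in `S`, then there is a
micro non-collider in `q ⁻¹' S`. -/
lemma seg_nonc (S : Set I) :
    ∀ (L : List (Step V)) (v c : V), G.IsWalk v c L → ∀ prev : Step V,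
      prev.b = v →
      ∀ t', (coWalk q L)[0]? = some t' → ¬ t'.headA → t'.a ∈ S →
      ∃ i u, NonColliderAt (prev :: L) i u ∧ u ∈ q ⁻¹' S := by
  intro L
  induction L with
  | nil =>
    intro v c _ prev _ t' ht _ _
    simp [coWalk_nil] at ht
  | cons u L'' ih =>
    intro v c hw prev hpb t' ht hnta htS
    cases hw with
    | cons _ _ hok hw' =>
      by_cases hq : q u.a = q u.b
      · rw [coWalk_cons_eq q L'' hq] at ht
        obtain ⟨i, w, hc, hd⟩ := ih u.b c hw' u rfl t' ht hnta htS
        exact ⟨i + 1, w, nonColliderAt_consShift hc, hd⟩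
      · rw [coWalk_cons_ne q L'' hq] at ht
        simp only [List.getElem?_cons_zero, Option.some.injEq] at ht
        have hnha : ¬ u.headA := by
          intro h
          apply hnta
          rcases h with h | h
          · exact Or.inl (by rw [← ht]; exact h)
          · exact Or.inr (by rw [← ht]; exact h)
        refine ⟨0, u.a, ⟨prev, u, by simp, by simp, hpb, rfl, fun h => hnha h.2⟩, ?_⟩
        have : q u.a = t'.a := by rw [← ht]
        simpa [Set.mem_preimage, this] using htS

lemma coll_transfer (hDMG : G.IsDMG) (S : Set I) :
    ∀ {x y : V} {L : List (Step V)}, G.IsWalk x y L →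
      ∀ i W, ColliderAt (coWalk q L) i W →
      (∀ D, Relation.ReflTransGen (G.coarse q).dir W D → D ∉ S) →
      ∃ j v, ColliderAt L j v ∧
        ∀ d, Relation.ReflTransGen G.dir v d → d ∉ q ⁻¹' S := by
  intro x y L hw
  induction hw with
  | nil a =>
    intro i W h _
    obtain ⟨s, t, h1, _⟩ := h
    simp [coWalk_nil] at h1
  | @cons c s L hok hw ih =>
    intro i W h hW
    by_cases hq : q s.a = q s.b
    · rw [coWalk_cons_eq q L hq] at h
      obtain ⟨j, v, hc, hd⟩ := ih i W h hW
      exact ⟨j + 1, v, colliderAt_consShift hc, hd⟩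
    · rw [coWalk_cons_ne q L hq] at h
      match i with
      | Nat.succ i =>
        obtain ⟨a, b, h1, h2, h3, h4, h5, h6⟩ := h
        have hc : ColliderAt (coWalk q L) i W :=
          ⟨a, b, by simpa using h1, by simpa using h2, h3, h4, h5, h6⟩
        obtain ⟨j, v, hc', hd⟩ := ih i W hc hW
        exact ⟨j + 1, v, colliderAt_consShift hc', hd⟩
      | 0 =>
        obtain ⟨a, b, h1, h2, h3, h4, h5, h6⟩ := h
        simp only [List.getElem?_cons_zero, Option.some.injEq] at h1
        simp only [List.getElem?_cons_succ] at h2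
        have hsb : q s.b = W := by rw [← h1] at h3; exact h3
        have hsB : s.headB := by
          rcases h5 with h | h
          · exact Or.inl (by rw [← h1] at h; exact h)
          · exact Or.inr (by rw [← h1] at h; exact h)
        have hdesc : ∀ d, Relation.ReflTransGen G.dir s.b d → q d ∉ S :=
          fun d hd => hW (q d) (hsb ▸ map_desc q hd)
        exact seg_coll hDMG S L s.b c hw s rfl hsB hdesc b h2 h6

lemma nonc_transfer (S : Set I) :
    ∀ {x y : V} {L : List (Step V)}, G.IsWalk x y L →
      ∀ i W, NonColliderAt (coWalk q L) i W → W ∈ S →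
      ∃ j v, NonColliderAt L j v ∧ v ∈ q ⁻¹' S := by
  intro x y L hw
  induction hw with
  | nil a =>
    intro i W h _
    obtain ⟨s, t, h1, _⟩ := h
    simp [coWalk_nil] at h1
  | @cons c s L hok hw ih =>
    intro i W h hW
    by_cases hq : q s.a = q s.b
    · rw [coWalk_cons_eq q L hq] at h
      obtain ⟨j, v, hc, hd⟩ := ih i W h hW
      exact ⟨j + 1, v, nonColliderAt_consShift hc, hd⟩
    · rw [coWalk_cons_ne q L hq] at h
      match i with
      | Nat.succ i =>
        obtain ⟨a, b, h1, h2, h3, h4, h5⟩ := h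
        have hc : NonColliderAt (coWalk q L) i W :=
          ⟨a, b, by simpa using h1, by simpa using h2, h3, h4, h5⟩
        obtain ⟨j, v, hc', hd⟩ := ih i W hc hW
        exact ⟨j + 1, v, nonColliderAt_consShift hc', hd⟩
      | 0 =>
        obtain ⟨a, b, h1, h2, h3, h4, h5⟩ := h
        simp only [List.getElem?_cons_zero, Option.some.injEq] at h1
        simp only [List.getElem?_cons_succ] at h2
        have hsb : q s.b = W := by rw [← h1] at h3; exact h3
        by_cases hsB : s.headB
        · -- the arrowhead is missing at the first node of the next coarse step
          have hnta : ¬ b.headA := by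
            intro hta
            apply h5
            constructor
            · rcases hsB with h | h
              · exact Or.inl (by rw [← h1]; exact h)
              · exact Or.inr (by rw [← h1]; exact h)
            · exact hta
          have htaS : b.a ∈ S := h4 ▸ hW
          obtain ⟨j, v, hc, hv⟩ := seg_nonc S L s.b c hw s rfl b h2 hnta htaS
          exact ⟨j, v, hc, hv⟩
        · -- the arrowhead is missing at s.b itself
          cases L with
          | nil => simp [coWalk_nil] at h2
          | cons u L'' =>
            have hua : u.a = s.b := walk_cons_start hw
            refine ⟨0, s.b, ⟨s, u, by simp, by simp, rfl, hua, fun h => hsB h.1⟩, ?_⟩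
            simpa [Set.mem_preimage, hsb] using hW

theorem mBlocked_coarse_aux (G : MixedGraph V) (hDMG : G.IsDMG) (q : V → I) :
    ∀ (x y : V) (L : List (Step V)), G.IsWalk x y L → ∀ S : Set I,
      (G.coarse q).MBlockedWalk S (q x) (q y) (coWalk q L) →
      G.MBlockedWalk (q ⁻¹' S) x y L := by
  intro x y L hw S hB
  rcases hB with h | h | ⟨i, W, hc, hW⟩ | ⟨i, W, hnc, hW⟩
  · exact Or.inl h
  · exact Or.inr (Or.inl h)
  · obtain ⟨j, v, hc', hd⟩ := coll_transfer hDMG S hw i W hc hW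
    exact Or.inr (Or.inr (Or.inl ⟨j, v, hc', hd⟩))
  · obtain ⟨j, v, hnc', hv⟩ := nonc_transfer S hw i W hnc hW
    exact Or.inr (Or.inr (Or.inr ⟨j, v, hnc', hv⟩))

end Aux

open MixedGraph in
/-- Let `G` be a directed mixed graph and `q` the quotient map of a
partition of its nodes.
(i) If `L` is a walk on `G` from `x` to `y` whose induced coarse walk is m-blocked
by a set `S` of groups, then `L` is m-blocked by `T = q ⁻¹' S`.
(ii) If a set `S` of groups m-separates the groups `Y` and `Z` in the coarse graph,
then `T = q ⁻¹' S` m-separates every pair of micro-nodes `y ∈ Y`, `z ∈ Z` in `G`. -/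
theorem mBlocked_and_mSep_coarse {V I : Type} (G : MixedGraph V)
    (hDMG : G.IsDMG) (q : V → I) (hq : Function.Surjective q) :
    (∀ (x y : V) (L : List (Step V)), G.IsWalk x y L → ∀ S : Set I,
      (G.coarse q).MBlockedWalk S (q x) (q y) (coWalk q L) →
      G.MBlockedWalk (q ⁻¹' S) x y L) ∧
    (∀ (Y Z : I) (S : Set I), (G.coarse q).MSep S Y Z →
      ∀ y z, q y = Y → q z = Z → G.MSep (q ⁻¹' S) y z) := by
  constructor
  · exact mBlocked_coarse_aux G hDMG q
  · intro Y Z S hsep y z hy hz L hw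
    subst hy; subst hz
    exact mBlocked_coarse_aux G hDMG q y z L hw S
      (hsep (coWalk q L) (coWalk_isWalk hw))
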